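/- arXiv:math/0412054 — 7 statements merged into one kernel-verified Lean document; each statement's English description precedes it below -/
import Mathlib

section
/- Let K be a field of characteristic zero, let f(t) = Σ_{n≥0} a_n t^n/n! be a formal power series in K[[t]] with a_0 = 1 and a_1 ≠ 0, and let g(t) = Σ_{n≥0} g_n t^n/n! be a formal power series with g_0 = 1. If the formal composition satisfies g(f(t) − 1) = 1 + t, then for every integer k ≥ 1 one has g_k = (k−1)! · [t^{k−1}]( (t/(f(t)−1))^k ), where t/(f(t)−1) denotes the multiplicative inverse in K[[t]] of the power series (f(t)−1)/t (which has nonzero constant term a_1), and [t^{k−1}] denotes the coefficient of t^{k−1}. -/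
open Finset Polynomial

/-- Exponential generating function of a sequence. -/
noncomputable def egf {R : Type*} [CommRing R] [Algebra ℚ R] (a : ℕ → R) : PowerSeries R :=
  PowerSeries.mk fun n => ((n.factorial : ℚ)⁻¹) • a n

/-- Formal composition of power series (the correct composition when the inner
series `h` has zero constant term, since then `h ^ n` has order at least `n`). -/
noncomputable def psComp {R : Type*} [CommRing R] (g h : PowerSeries R) : PowerSeries R :=
  PowerSeries.mk fun m =>
    ∑ n ∈ Finset.range (m + 1), (PowerSeries.coeff n g) * (PowerSeries.coeff m (h ^ n))

/-- Partial Bell polynomials of a sequence `a` (with `a 0 = 1`):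
`B_{n,k} = (n!/k!) · [t^n] (f(t) - 1)^k` where `f` is the e.g.f. of `a`. -/
noncomputable def bellPartial {R : Type*} [CommRing R] [Algebra ℚ R] (a : ℕ → R) (n k : ℕ) : R :=
  ((n.factorial : ℚ) / (k.factorial : ℚ)) • (PowerSeries.coeff n ((egf a - 1) ^ k))

/-- Stirling numbers of the second kind. -/
def stirling2 : ℕ → ℕ → ℕ
  | 0, 0 => 1
  | 0, _ + 1 => 0
  | _ + 1, 0 => 0
  | n + 1, k + 1 => (k + 1) * stirling2 n (k + 1) + stirling2 n k

/-- Bell numbers. -/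
def bellNum (n : ℕ) : ℕ := ∑ k ∈ Finset.range (n + 1), stirling2 n k

/-- Signed Stirling numbers of the first kind, defined as the coefficients of the
falling factorial `x (x-1) ⋯ (x-n+1) = Σ_k s(n,k) x^k`. -/
noncomputable def stirling1 (n k : ℕ) : ℚ := (descPochhammer ℚ n).coeff k

/-!
Write `u = f - 1 = t q`. Truncating `g(u) = 1 + t` after the term `u ^ k` and
differentiating gives `∑ⱼ (gⱼ / j!) (u ^ j)' ≡ 1 mod t ^ k`. Multiply by `q ^ (-k)` and take
`[t ^ (k - 1)]`: the `j`-th term is the residue of `(u ^ j)' / u ^ k`, which is `k` for `j = k` and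
`0` otherwise, because `(u ^ j)' / u ^ k` is then a derivative of a Laurent series. Hence
`k gₖ / k! = [t ^ (k - 1)] q ^ (-k)`.
-/

theorem coeff_egf {K : Type*} [Field K] [CharZero K] (a : ℕ → K) (n : ℕ) :
    PowerSeries.coeff n (egf a) = a n / n.factorial := by
  rw [egf, PowerSeries.coeff_mk, Rat.smul_def, Rat.cast_inv, Rat.cast_natCast, inv_mul_eq_div]

namespace PowerSeries

section CommRing

variable {R : Type*} [CommRing R]

theorem X_pow_dvd_psComp_sub_sum (g : R⟦X⟧) {h : R⟦X⟧} (hh : X ∣ h) (N : ℕ) :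
    X ^ N ∣ psComp g h - ∑ j ∈ range N, coeff j g • h ^ j := by
  refine X_pow_dvd_iff.mpr fun m hm => ?_
  have hvanish : ∀ j, m < j → coeff m (h ^ j) = 0 := fun j hj =>
    X_pow_dvd_iff.mp (pow_dvd_pow_of_dvd hh j) m hj
  rw [map_sub, psComp, coeff_mk, map_sum, sub_eq_zero]
  simp only [map_smul, smul_eq_mul]
  refine Finset.sum_subset (fun j hj => ?_) fun j _ hj => ?_
  · simp only [mem_range] at hj ⊢; omega
  · simp only [mem_range, not_lt] at hj
    rw [hvanish j (by omega), mul_zero]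

theorem X_pow_dvd_derivative {N : ℕ} {f : R⟦X⟧} (hf : X ^ (N + 1) ∣ f) :
    X ^ N ∣ d⁄dX R f :=
  X_pow_dvd_iff.mpr fun m hm => by
    rw [coeff_derivative, X_pow_dvd_iff.mp hf (m + 1) (by omega), zero_mul]

theorem coeff_mul_eq_of_X_pow_dvd_sub {n : ℕ} {f g : R⟦X⟧} (h : X ^ (n + 1) ∣ f - g) (r : R⟦X⟧) :
    coeff n (r * f) = coeff n (r * g) := by
  rw [← sub_eq_zero, ← map_sub, ← mul_sub]
  exact X_pow_dvd_iff.mp (dvd_mul_of_dvd_right h r) n (Nat.lt_succ_self n)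

end CommRing

section Field

variable {K : Type*} [Field K] [CharZero K]

/-- The residue of `u' / u ^ (m + 2)` vanishes for `u = X * q`: as a formal Laurent series it is
the derivative of `-u ^ (-(m + 1)) / (m + 1)`. -/
theorem coeff_succ_inv_pow_mul_derivative_X_mul (q : K⟦X⟧) (m : ℕ) :
    coeff (m + 1) (q⁻¹ ^ (m + 2) * d⁄dX K (X * q)) = 0 := by
  rcases eq_or_ne (constantCoeff q) 0 with hq | hq
  · simp [inv_eq_zero.mpr hq]
  have hEuler : (m + 1) • (q⁻¹ ^ (m + 2) * d⁄dX K (X * q)) =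
      (m + 1) • q⁻¹ ^ (m + 1) - X * d⁄dX K (q⁻¹ ^ (m + 1)) := by
    have hinv : q⁻¹ * q = 1 := PowerSeries.inv_mul_cancel q hq
    rw [Derivation.leibniz_pow, Derivation.leibniz, derivative_inv', derivative_X, Nat.add_sub_cancel]
    linear_combination (norm := (simp only [smul_eq_mul, nsmul_eq_mul]; push_cast; ring_nf))
      ((m : K⟦X⟧) + 1) * q⁻¹ ^ (m + 1) * hinv
  have h := congrArg (coeff (m + 1)) hEuler
  rw [map_nsmul, map_sub, map_nsmul, coeff_succ_X_mul, coeff_derivative, nsmul_eq_mul,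
    nsmul_eq_mul] at h
  push_cast at h
  exact (mul_eq_zero.mp (by rw [h]; ring)).resolve_left (Nat.cast_add_one_ne_zero m)

theorem coeff_inv_pow_mul_derivative_X_mul_pow {q : K⟦X⟧} (hq : constantCoeff q ≠ 0) (n j : ℕ) :
    coeff n (q⁻¹ ^ (n + 1) * d⁄dX K ((X * q) ^ j)) = if j = n + 1 then (n + 1 : K) else 0 := by
  have hinv : q⁻¹ * q = 1 := PowerSeries.inv_mul_cancel q hq
  obtain _ | i := j
  · simp
  have hsplit : q⁻¹ ^ (n + 1) * d⁄dX K ((X * q) ^ (i + 1)) =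
      (i + 1) • (X ^ i * (q⁻¹ ^ (n + 1) * q ^ i * d⁄dX K (X * q))) := by
    rw [Derivation.leibniz_pow, Nat.add_sub_cancel, smul_eq_mul, mul_pow]
    simp only [nsmul_eq_mul]
    ring
  rw [hsplit, map_nsmul, coeff_X_pow_mul', nsmul_eq_mul]
  rcases lt_trichotomy i n with hlt | rfl | hgt
  · obtain ⟨m, rfl⟩ := Nat.exists_eq_add_of_lt hlt
    have hcancel : q⁻¹ ^ (i + m + 1 + 1) * q ^ i = q⁻¹ ^ (m + 2) := by
      rw [show i + m + 1 + 1 = (m + 2) + i by omega, pow_add, mul_assoc, ← mul_pow, hinv,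
        one_pow, mul_one]
    rw [if_pos (by omega), if_neg (by omega), hcancel, show i + m + 1 - i = m + 1 by omega,
      coeff_succ_inv_pow_mul_derivative_X_mul, mul_zero]
  · have hconst : constantCoeff (q⁻¹ ^ (i + 1) * q ^ i * d⁄dX K (X * q)) = 1 := by
      rw [map_mul, map_mul, map_pow, map_pow, constantCoeff_inv,
        ← coeff_zero_eq_constantCoeff_apply (d⁄dX K _), coeff_derivative, coeff_succ_X_mul,
        coeff_zero_eq_constantCoeff_apply, Nat.cast_zero, zero_add, mul_one, inv_pow,
        mul_assoc, ← pow_succ, inv_mul_cancel₀ (pow_ne_zero _ hq)]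
    rw [if_pos le_rfl, if_pos rfl, Nat.sub_self, coeff_zero_eq_constantCoeff_apply, hconst]
    push_cast
    ring
  · rw [if_neg (by omega), if_neg (by omega), mul_zero]

end Field

end PowerSeries

theorem lagrange_inversion_general (K : Type*) [Field K] [CharZero K]
    (a b : ℕ → K) (ha1 : a 1 ≠ 0)
    (hcomp : psComp (egf b) (egf a - 1) = 1 + PowerSeries.X)
    (q : PowerSeries K) (hq : q * PowerSeries.X = egf a - 1) :
    ∀ k : ℕ, 1 ≤ k →
      b k = ((k - 1).factorial : K) * PowerSeries.coeff (k - 1) (q⁻¹ ^ k) := by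
  intro k hk
  obtain ⟨n, rfl⟩ := Nat.exists_eq_add_of_le' hk
  rw [Nat.add_sub_cancel]
  have hq0 : PowerSeries.constantCoeff q ≠ 0 := by
    have h := congrArg (PowerSeries.coeff 1) hq
    simp only [PowerSeries.coeff_succ_mul_X, PowerSeries.coeff_zero_eq_constantCoeff_apply,
      map_sub, PowerSeries.coeff_one, coeff_egf] at h
    simpa [h] using ha1
  set S := ∑ j ∈ range (n + 2), PowerSeries.coeff j (egf b) • (PowerSeries.X * q) ^ j
  have hDS : PowerSeries.X ^ (n + 1) ∣ PowerSeries.derivative K S - 1 := by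
    rw [← hq, mul_comm] at hcomp
    have h := PowerSeries.X_pow_dvd_psComp_sub_sum (egf b) (dvd_mul_right PowerSeries.X q) (n + 2)
    rw [hcomp] at h
    have h' := PowerSeries.X_pow_dvd_derivative (dvd_sub_comm.mp h)
    rwa [map_sub, map_add, PowerSeries.derivative_one, PowerSeries.derivative_X, zero_add] at h'
  have hcoeff := PowerSeries.coeff_mul_eq_of_X_pow_dvd_sub hDS (q⁻¹ ^ (n + 1))
  simp only [S, map_sum, Derivation.map_smul, mul_smul_comm, Finset.mul_sum, map_smul,
    PowerSeries.coeff_inv_pow_mul_derivative_X_mul_pow hq0, smul_eq_mul, mul_ite, mul_zero,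
    sum_ite_eq', mem_range, if_pos (Nat.lt_succ_self _), mul_one, coeff_egf] at hcoeff
  rw [← hcoeff, Nat.factorial_succ, Nat.cast_mul, Nat.cast_succ]
  field_simp [Nat.factorial_ne_zero]

/-- **Lagrange inversion formula** (exponential form). If `f` is the e.g.f. of `a`
with `a 0 = 1`, `a 1 ≠ 0`, `g` is the e.g.f. of a sequence `b` with `b 0 = 1`, and
`g(f(t) - 1) = 1 + t`, then `g_k = (k-1)! · [t^{k-1}] ((t/(f(t)-1))^k)`, where
`q` is the series with `q · t = f(t) - 1` (so `t/(f(t)-1) = q⁻¹`). -/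
theorem lagrange_inversion (K : Type*) [Field K] [CharZero K]
    (a b : ℕ → K) (ha0 : a 0 = 1) (ha1 : a 1 ≠ 0) (hb0 : b 0 = 1)
    (hcomp : psComp (egf b) (egf a - 1) = 1 + PowerSeries.X)
    (q : PowerSeries K) (hq : q * PowerSeries.X = egf a - 1) :
    ∀ k : ℕ, 1 ≤ k →
      b k = ((k - 1).factorial : K) * PowerSeries.coeff (k - 1) (q⁻¹ ^ k) :=
  lagrange_inversion_general K a b ha1 hcomp q hq
end

section
/- Let (b_n)_{n≥0} be a sequence of rational numbers. Then Σ_{k=0}^n s(n,k) b_k = 1 for all n ≥ 0 if and only if b_0 = 1 and b_{n+1} = Σ_{k=0}^n C(n,k) b_k for all n ≥ 0 (the recursion characterizing the Bell numbers). Here s(n,k) are the signed Stirling numbers of the first kind and C(n,k) are binomial coefficients. -/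
open Finset Polynomial

/-!
Let `L` be the linear functional `X ^ k ↦ b k` on `ℚ[X]`, so that the hypothesis reads
`L (x)ₙ = 1` for the falling factorials `(x)ₙ`. The Bell recursion says `L (X * p) = L (p (X + 1))`
for `p = X ^ n`, hence for every `p`; as `(x)ₙ₊₁ = X * (x)ₙ (X - 1)`, induction gives `L (x)ₙ = 1`.
Conversely, `(x)ₙ` is monic of degree `n`, so the values `L (x)ₙ` determine `b` by triangularity,
and the Bell numbers already realise the value `1` for all `n`.
-/

namespace Polynomial

variable {R : Type*} [CommRing R]

/-- The linear functional `X ^ k ↦ b k`. -/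
noncomputable def umbral (b : ℕ → R) : R[X] →ₗ[R] R :=
  lsum fun k => LinearMap.toSpanSingleton R R (b k)

theorem umbral_apply (b : ℕ → R) (p : R[X]) : umbral b p = p.sum fun k a => a * b k := by
  simp [umbral, lsum_apply, smul_eq_mul]

theorem umbral_monomial (b : ℕ → R) (n : ℕ) (a : R) : umbral b (monomial n a) = a * b n := by
  rw [umbral_apply, sum_monomial_index a _ (zero_mul (b n))]

theorem umbral_eq_sum_range {b : ℕ → R} {p : R[X]} {n : ℕ} (hp : p.natDegree ≤ n) :
    umbral b p = ∑ k ∈ range (n + 1), p.coeff k * b k :=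
  (umbral_apply b p).trans <|
    sum_over_range' p (fun k => zero_mul (b k)) _ (Nat.lt_succ_of_le hp)

theorem umbral_X_add_one_pow (b : ℕ → R) (n : ℕ) :
    umbral b ((X + 1) ^ n) = ∑ k ∈ range (n + 1), (n.choose k : R) * b k := by
  have hdeg : ((X + 1 : R[X]) ^ n).natDegree ≤ n :=
    natDegree_le_iff_coeff_eq_zero.2 fun k hk => by
      simp [coeff_X_add_one_pow, Nat.choose_eq_zero_of_lt (by exact_mod_cast hk)]
  simp [umbral_eq_sum_range hdeg, coeff_X_add_one_pow]

/-- The Bell recursion is this identity for `p = X ^ n`. -/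
theorem umbral_X_mul {b : ℕ → R}
    (hrec : ∀ n, b (n + 1) = ∑ k ∈ range (n + 1), (n.choose k : R) * b k) (p : R[X]) :
    umbral b (X * p) = umbral b (p.comp (X + 1)) := by
  induction p using Polynomial.induction_on' with
  | add p q hp hq => rw [mul_add, map_add, add_comp, map_add, hp, hq]
  | monomial n a =>
    rw [X_mul_monomial, umbral_monomial, monomial_comp, ← smul_eq_C_mul, map_smul,
      umbral_X_add_one_pow, ← hrec, smul_eq_mul, mul_comm]

theorem umbral_descPochhammer {b : ℕ → R} (h0 : b 0 = 1)
    (hrec : ∀ n, b (n + 1) = ∑ k ∈ range (n + 1), (n.choose k : R) * b k) (n : ℕ) :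
    umbral b (descPochhammer R n) = 1 := by
  induction n with
  | zero => simpa [← C_1, ← monomial_zero_left, umbral_monomial] using h0
  | succ n ih =>
    rw [descPochhammer_succ_left, umbral_X_mul hrec, comp_assoc]
    simpa [sub_comp] using ih

theorem natDegree_descPochhammer_le (n : ℕ) : (descPochhammer R n).natDegree ≤ n := by
  rw [← descPochhammer_map (Int.castRingHom R)]
  exact natDegree_map_le.trans_eq (descPochhammer_natDegree ℤ n)

theorem coeff_descPochhammer_self (n : ℕ) : (descPochhammer R n).coeff n = 1 := by
  have hmonic := monic_descPochhammer ℤ n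
  rw [Monic, leadingCoeff, descPochhammer_natDegree] at hmonic
  rw [← descPochhammer_map (Int.castRingHom R), coeff_map, hmonic, map_one]

theorem umbral_descPochhammer_eq_sum_add (b : ℕ → R) (n : ℕ) :
    umbral b (descPochhammer R n) = ∑ k ∈ range n, (descPochhammer R n).coeff k * b k + b n := by
  rw [umbral_eq_sum_range (natDegree_descPochhammer_le n), sum_range_succ,
    coeff_descPochhammer_self, one_mul]

theorem eq_of_umbral_descPochhammer_eq {b c : ℕ → R}
    (h : ∀ n, umbral b (descPochhammer R n) = umbral c (descPochhammer R n)) : b = c := by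
  funext n
  induction n using Nat.strong_induction_on with
  | _ n ih =>
    have hn := h n
    rw [umbral_descPochhammer_eq_sum_add, umbral_descPochhammer_eq_sum_add,
      sum_congr rfl fun k hk => by rw [ih k (mem_range.mp hk)]] at hn
    exact add_left_cancel hn

end Polynomial

theorem Nat.cast_bell_succ {R : Type*} [CommRing R] (n : ℕ) :
    ((n + 1).bell : R) = ∑ k ∈ range (n + 1), (n.choose k : R) * k.bell := by
  rw [Nat.bell_succ, ← Nat.range_succ_eq_Iic, ← sum_range_reflect]
  push_cast
  refine sum_congr rfl fun k hk => ?_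
  have hkn : k ≤ n := Nat.lt_succ_iff.mp (mem_range.mp hk)
  rw [Nat.choose_symm hkn, Nat.sub_sub_self hkn]

/-- A sequence of rationals has all falling-factorial moments equal to `1`
iff it satisfies the Bell-number recursion. -/
theorem bell_umbra_characterization (b : ℕ → ℚ) :
    (∀ n : ℕ, ∑ k ∈ Finset.range (n + 1), stirling1 n k * b k = 1) ↔
      (b 0 = 1 ∧ ∀ n : ℕ, b (n + 1) = ∑ k ∈ Finset.range (n + 1), (n.choose k : ℚ) * b k) := by
  have hmoment (c : ℕ → ℚ) (n : ℕ) :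
      ∑ k ∈ range (n + 1), stirling1 n k * c k = umbral c (descPochhammer ℚ n) :=
    (umbral_eq_sum_range (natDegree_descPochhammer_le n)).symm
  simp only [hmoment]
  constructor
  · intro hb
    have hbell : ∀ n, umbral (fun k => (k.bell : ℚ)) (descPochhammer ℚ n) = 1 :=
      umbral_descPochhammer (by simp) Nat.cast_bell_succ
    obtain rfl := eq_of_umbral_descPochhammer_eq fun n => (hb n).trans (hbell n).symm
    exact ⟨by simp, Nat.cast_bell_succ⟩
  · rintro ⟨h0, hrec⟩
    exact umbral_descPochhammer h0 hrec
end

section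
/- For every nonnegative integer n, the n-th Bell number satisfies Dobinski's formula: B_n = e^{−1} · Σ_{k=0}^∞ k^n / k!, where the series on the right converges in ℝ. -/
open Finset Polynomial

/-!
Expanding `k ^ n = ∑ⱼ S(n, j) · k (k - 1) ⋯ (k - j + 1)` in falling factorials reduces the
series to `∑ₖ k (k - 1) ⋯ (k - j + 1) · xᵏ / k! = xʲ · eˣ`, obtained by shifting the exponential
series by `j`. Hence `∑ₖ kⁿ xᵏ / k! = eˣ · ∑ⱼ S(n, j) xʲ`, and `x = 1` gives `e · Bₙ`.
-/

theorem stirling2_eq_stirlingSecond : stirling2 = Nat.stirlingSecond := by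
  funext n k
  induction n generalizing k with
  | zero => cases k <;> rfl
  | succ n ih => cases k <;> simp only [stirling2, Nat.stirlingSecond, ih]

theorem descPochhammer_mul_X (R : Type*) [Ring R] (j : ℕ) :
    descPochhammer R j * X = descPochhammer R (j + 1) + (j : R[X]) * descPochhammer R j := by
  rw [descPochhammer_succ_right, mul_sub, ← (Nat.cast_commute j _).eq]
  abel

theorem X_pow_eq_sum_stirlingSecond_mul_descPochhammer (R : Type*) [Ring R] (n : ℕ) :
    (X : R[X]) ^ n =
      ∑ j ∈ range (n + 1), (Nat.stirlingSecond n j : R[X]) * descPochhammer R j := by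
  induction n with
  | zero => simp
  | succ n ih =>
    have shift : ∑ j ∈ range (n + 1), (Nat.stirlingSecond n j : R[X]) * (j * descPochhammer R j) =
        ∑ j ∈ range (n + 1),
          ((j + 1 : ℕ) : R[X]) * (Nat.stirlingSecond n (j + 1) * descPochhammer R (j + 1)) := by
      rw [sum_range_succ', sum_range_succ, Nat.stirlingSecond_eq_zero_of_lt n.lt_succ_self]
      simp only [Nat.cast_zero, zero_mul, mul_zero, add_zero]
      exact sum_congr rfl fun j _ => by rw [← mul_assoc, ← mul_assoc, Nat.cast_comm]
    rw [pow_succ, ih, sum_mul, sum_range_succ' _ (n + 1)]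
    simp only [mul_assoc, descPochhammer_mul_X, mul_add, sum_add_distrib, shift,
      Nat.stirlingSecond_succ_succ, Nat.stirlingSecond_succ_zero, Nat.cast_zero, zero_mul,
      add_zero, Nat.cast_add, Nat.cast_mul, add_mul]
    abel

section

open Nat

theorem Nat.pow_eq_sum_stirlingSecond_mul_descFactorial (n k : ℕ) :
    k ^ n = ∑ j ∈ range (n + 1), stirlingSecond n j * k.descFactorial j := by
  apply Nat.cast_injective (R := ℤ)
  simpa [eval_finsetSum, descPochhammer_eval_eq_descFactorial] using
    congrArg (eval (k : ℤ)) (X_pow_eq_sum_stirlingSecond_mul_descPochhammer ℤ n)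

theorem Real.hasSum_descFactorial_mul_pow_div_factorial (j : ℕ) (x : ℝ) :
    HasSum (fun k : ℕ => k.descFactorial j * x ^ k / k !) (x ^ j * Real.exp x) := by
  refine (hasSum_nat_add_iff' j).mp ?_
  have vanish : ∑ k ∈ range j, (k.descFactorial j * x ^ k / k ! : ℝ) = 0 :=
    sum_eq_zero fun k hk => by simp [descFactorial_eq_zero_iff_lt.mpr (mem_range.mp hk)]
  have shifted (m : ℕ) :
      ((m + j).descFactorial j * x ^ (m + j) / (m + j)! : ℝ) = x ^ j * (x ^ m / m !) := by
    have h := factorial_mul_descFactorial (Nat.le_add_left j m)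
    rw [Nat.add_sub_cancel] at h
    rw [← h]
    push_cast
    field_simp
    ring
  rw [vanish, sub_zero]
  simpa only [shifted] using
    (Real.exp_eq_exp_ℝ ▸ NormedSpace.expSeries_div_hasSum_exp x).mul_left (x ^ j)

theorem Real.hasSum_pow_mul_pow_div_factorial (n : ℕ) (x : ℝ) :
    HasSum (fun k : ℕ => (k : ℝ) ^ n * x ^ k / k !)
      (Real.exp x * ∑ j ∈ range (n + 1), (stirlingSecond n j : ℝ) * x ^ j) := by
  have h := hasSum_sum fun j (_ : j ∈ range (n + 1)) =>
    (hasSum_descFactorial_mul_pow_div_factorial j x).mul_left (stirlingSecond n j : ℝ)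
  have terms (k : ℕ) : (k : ℝ) ^ n * x ^ k / k ! =
      ∑ j ∈ range (n + 1), (stirlingSecond n j : ℝ) * (k.descFactorial j * x ^ k / k !) := by
    rw [← Nat.cast_pow, pow_eq_sum_stirlingSecond_mul_descFactorial, Nat.cast_sum, sum_mul,
      sum_div]
    push_cast
    exact sum_congr rfl fun j _ => by ring
  have total : Real.exp x * ∑ j ∈ range (n + 1), (stirlingSecond n j : ℝ) * x ^ j =
      ∑ j ∈ range (n + 1), (stirlingSecond n j : ℝ) * (x ^ j * Real.exp x) := by
    rw [mul_sum]
    exact sum_congr rfl fun j _ => by ring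
  simpa only [terms, total] using h

end

/-- **Dobinski's formula**: `B_n = e⁻¹ · Σ_{k≥0} k^n / k!`. -/
theorem dobinski (n : ℕ) :
    (bellNum n : ℝ) = Real.exp (-1) * ∑' k : ℕ, (k : ℝ) ^ n / (k.factorial : ℝ) := by
  have touchard := Real.hasSum_pow_mul_pow_div_factorial n 1
  simp only [one_pow, mul_one] at touchard
  rw [touchard.tsum_eq, ← mul_assoc, ← Real.exp_add, neg_add_cancel, Real.exp_zero, one_mul,
    bellNum, stirling2_eq_stirlingSecond, Nat.cast_sum]
end

section
/- In the formal power series ring ℚ[x][[t]], the exponential generating function of the exponential polynomials satisfies Σ_{n≥0} Φ_n(x) t^n/n! = exp( x · (e^t − 1) ), where e^t − 1 = Σ_{n≥1} t^n/n! and exp denotes the formal exponential of a power series with zero constant term. -/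
open Finset Polynomial

/-!
Since `(eᵗ - 1)' = (eᵗ - 1) + 1`, differentiating `(eᵗ - 1)^(k+1)` shows that the numbers
`m! [tᵐ] (eᵗ - 1)^k` obey the recurrence of `k! S(m, k)`. Expanding
`exp (x (eᵗ - 1)) = Σₖ xᵏ (eᵗ - 1)^k / k!` coefficientwise then gives `Σₖ S(m, k) xᵏ / m!`,
for `x` in any commutative `ℚ`-algebra.
-/

namespace PowerSeries

open Nat

variable {A : Type*} [CommRing A] [Algebra ℚ A]

theorem derivative_exp_sub_one_pow_succ (k : ℕ) :
    d⁄dX A ((exp A - 1) ^ (k + 1)) = (k + 1) • ((exp A - 1) ^ (k + 1) + (exp A - 1) ^ k) := by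
  rw [Derivation.leibniz_pow, map_sub, derivative_exp, Derivation.map_one_eq_zero, sub_zero,
    Nat.add_sub_cancel]
  ring

theorem factorial_mul_coeff_exp_sub_one_pow (m k : ℕ) :
    (m ! : ℚ) * coeff m ((exp ℚ - 1) ^ k) = k ! * stirling2 m k := by
  induction m generalizing k with
  | zero => cases k <;> simp [stirling2]
  | succ m ih =>
    cases k with
    | zero => simp [stirling2, coeff_one]
    | succ k =>
      have h := congrArg (coeff m) (derivative_exp_sub_one_pow_succ (A := ℚ) k)
      rw [coeff_derivative, map_nsmul, map_add, nsmul_eq_mul, Nat.cast_succ] at h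
      calc ((m + 1) ! : ℚ) * coeff (m + 1) ((exp ℚ - 1) ^ (k + 1))
          = (k + 1) * ((m ! : ℚ) * coeff m ((exp ℚ - 1) ^ (k + 1))
              + (m ! : ℚ) * coeff m ((exp ℚ - 1) ^ k)) := by
            rw [factorial_succ, Nat.cast_mul, Nat.cast_succ]
            linear_combination (m ! : ℚ) * h
        _ = (k + 1) ! * stirling2 (m + 1) (k + 1) := by
            rw [ih, ih, factorial_succ, stirling2]
            push_cast
            ring

theorem coeff_exp_sub_one_pow (m k : ℕ) :
    coeff m ((exp A - 1) ^ k) = algebraMap ℚ A (k ! * stirling2 m k / m !) := by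
  have hmap : (exp A - 1) ^ k = map (algebraMap ℚ A) ((exp ℚ - 1) ^ k) := by
    simp only [map_pow, map_sub, map_one, map_exp]
  rw [hmap, coeff_map, ← factorial_mul_coeff_exp_sub_one_pow,
    mul_div_cancel_left₀ _ (by positivity)]

theorem psComp_exp_C_mul_exp_sub_one (a : A) :
    psComp (exp A) (C a * (exp A - 1)) =
      egf (fun m => ∑ k ∈ range (m + 1), (stirling2 m k : A) * a ^ k) := by
  ext m
  rw [psComp, egf, coeff_mk, coeff_mk, smul_sum]
  refine sum_congr rfl fun k _ => ?_
  have hscalar : (1 / k ! : ℚ) * (k ! * stirling2 m k / m !) = (m ! : ℚ)⁻¹ * stirling2 m k := by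
    field_simp
  calc coeff k (exp A) * coeff m ((C a * (exp A - 1)) ^ k)
      = algebraMap ℚ A ((1 / k ! : ℚ) * (k ! * stirling2 m k / m !)) * a ^ k := by
        rw [mul_pow, ← map_pow, coeff_C_mul, coeff_exp, coeff_exp_sub_one_pow, map_mul]
        ring
    _ = (m ! : ℚ)⁻¹ • ((stirling2 m k : A) * a ^ k) := by
        rw [hscalar, map_mul, map_natCast, Algebra.smul_def, mul_assoc]

end PowerSeries

/-- Generating function of the exponential polynomials:
`Σ_n Φ_n(x) t^n/n! = exp(x (e^t − 1))` in `ℚ[x][[t]]`, where the outer `exp` is the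
formal exponential (composition of the exponential series with a series having zero
constant term). -/
theorem exponential_poly_egf :
    egf (fun n => ∑ k ∈ Finset.range (n + 1),
        Polynomial.C (stirling2 n k : ℚ) * Polynomial.X ^ k) =
      psComp (PowerSeries.exp (Polynomial ℚ))
        (PowerSeries.C Polynomial.X * (PowerSeries.exp (Polynomial ℚ) - 1)) := by
  simpa only [map_natCast] using (PowerSeries.psComp_exp_C_mul_exp_sub_one Polynomial.X).symm
end

section
/- Let R be a commutative ℚ-algebra, let a : ℕ → R be a sequence with a_0 = 1, and let g : ℕ → R be a sequence with g_0 = 1. Define c_n = Σ_{k=0}^n g_k · B_{n,k} and d_n = Σ_{k=0}^n g_{k+1} · B_{n,k}, where B_{n,k} are the partial Bell polynomials of the sequence a. Then for all n ≥ 0: c_{n+1} = Σ_{i=0}^n C(n,i) · a_{n−i+1} · d_i. -/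
open Finset Polynomial

/-! With `h = f - 1`, the e.g.f. of `n ↦ B_{n,k}` is `h^k / k!`. Differentiating `h^(k+1)/(k+1)!`
gives `h^k/k! · f'`, and reading coefficients through the binomial convolution of e.g.f.s yields
`B_{n+1,k+1} = Σ_i C(n,i) a_{n-i+1} B_{i,k}`. Summing this against `g_{k+1}` and exchanging the
sums gives the recursion, since `B_{n+1,0} = 0` and `B_{i,k} = 0` for `k > i` (`h` has no
constant term). -/

section EGF

open scoped PowerSeries

variable {R : Type*} [CommRing R] [Algebra ℚ R]

theorem coeff_egf_s14 (a : ℕ → R) (n : ℕ) :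
    PowerSeries.coeff n (egf a) = ((n.factorial : ℚ)⁻¹) • a n :=
  PowerSeries.coeff_mk _ _

theorem egf_injective : Function.Injective (egf : (ℕ → R) → R⟦X⟧) := by
  intro a b hab
  funext n
  have h := congrArg (PowerSeries.coeff n) hab
  rw [coeff_egf_s14, coeff_egf_s14] at h
  exact smul_right_injective R (inv_ne_zero (Nat.cast_ne_zero.mpr n.factorial_ne_zero)) h

theorem derivative_egf (a : ℕ → R) : d⁄dX R (egf a) = egf (fun n => a (n + 1)) := by
  ext n
  have hn : (n.factorial : ℚ) ≠ 0 := Nat.cast_ne_zero.mpr n.factorial_ne_zero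
  rw [PowerSeries.coeff_derivative, coeff_egf_s14, coeff_egf_s14, ← Nat.cast_succ, mul_comm,
    ← nsmul_eq_mul, ← Nat.cast_smul_eq_nsmul ℚ, smul_smul, Nat.factorial_succ]
  congr 1
  push_cast
  field_simp

theorem egf_mul_egf (a b : ℕ → R) :
    egf a * egf b =
      egf (fun n => ∑ i ∈ range (n + 1), (n.choose i : R) * a i * b (n - i)) := by
  ext n
  rw [PowerSeries.coeff_mul, Nat.sum_antidiagonal_eq_sum_range_succ_mk, coeff_egf_s14, smul_sum]
  refine sum_congr rfl fun i hi => ?_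
  have hin : i ≤ n := Nat.lt_succ_iff.mp (mem_range.mp hi)
  rw [coeff_egf_s14, coeff_egf_s14, smul_mul_smul_comm, mul_assoc, ← nsmul_eq_mul,
    ← Nat.cast_smul_eq_nsmul ℚ, smul_smul, Nat.cast_choose ℚ hin]
  congr 1
  have := n.factorial_ne_zero
  field_simp

theorem egf_bellPartial (a : ℕ → R) (k : ℕ) :
    egf (fun n => bellPartial a n k) = ((k.factorial : ℚ)⁻¹) • (egf a - 1) ^ k := by
  ext n
  have hn : (n.factorial : ℚ) ≠ 0 := Nat.cast_ne_zero.mpr n.factorial_ne_zero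
  rw [coeff_egf_s14, bellPartial, PowerSeries.coeff_smul, smul_smul]
  congr 1
  field_simp

theorem derivative_egf_bellPartial_succ (a : ℕ → R) (k : ℕ) :
    d⁄dX R (egf fun n => bellPartial a n (k + 1)) =
      egf (fun n => bellPartial a n k) * d⁄dX R (egf a) := by
  have hk : ((k + 1 : ℕ) : ℚ) ≠ 0 := Nat.cast_ne_zero.mpr k.succ_ne_zero
  rw [egf_bellPartial, egf_bellPartial, Derivation.map_smul_of_tower, Derivation.leibniz_pow,
    map_sub, Derivation.map_one_eq_zero, sub_zero, smul_mul_assoc, ← Nat.cast_smul_eq_nsmul ℚ,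
    smul_smul, Nat.add_sub_cancel, Nat.factorial_succ, Nat.cast_mul, mul_inv, smul_eq_mul,
    mul_right_comm, inv_mul_cancel₀ hk, one_mul]

theorem bellPartial_succ_succ (a : ℕ → R) (n k : ℕ) :
    bellPartial a (n + 1) (k + 1) =
      ∑ i ∈ range (n + 1), (n.choose i : R) * a (n - i + 1) * bellPartial a i k := by
  have h := derivative_egf_bellPartial_succ a k
  rw [derivative_egf, derivative_egf, egf_mul_egf] at h
  rw [congrFun (egf_injective h) n]
  exact sum_congr rfl fun i _ => by ring

theorem bellPartial_succ_zero (a : ℕ → R) (n : ℕ) : bellPartial a (n + 1) 0 = 0 := by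
  simp [bellPartial, PowerSeries.coeff_one]

theorem bellPartial_eq_zero_of_lt {a : ℕ → R} (ha0 : a 0 = 1) {n k : ℕ} (hnk : n < k) :
    bellPartial a n k = 0 := by
  have h0 : PowerSeries.constantCoeff (egf a - 1) = 0 := by
    simp [← PowerSeries.coeff_zero_eq_constantCoeff, coeff_egf_s14, ha0]
  rw [bellPartial, PowerSeries.coeff_of_lt_order _ ((Nat.cast_lt.mpr hnk).trans_le
    (PowerSeries.le_order_pow_of_constantCoeff_eq_zero k h0)), smul_zero]

end EGF

theorem composition_umbra_recursion_general (R : Type*) [CommRing R] [Algebra ℚ R]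
    (a g : ℕ → R) (ha0 : a 0 = 1)
    (c d : ℕ → R)
    (hc : ∀ n, c n = ∑ k ∈ Finset.range (n + 1), g k * bellPartial a n k)
    (hd : ∀ n, d n = ∑ k ∈ Finset.range (n + 1), g (k + 1) * bellPartial a n k) :
    ∀ n : ℕ, c (n + 1) =
      ∑ i ∈ Finset.range (n + 1), (n.choose i : R) * a (n - i + 1) * d i := by
  intro n
  have hd_range : ∀ i ∈ range (n + 1),
      d i = ∑ k ∈ range (n + 1), g (k + 1) * bellPartial a i k := fun i hi => by
    rw [hd]
    refine sum_subset (range_subset_range.mpr (by simpa using hi)) fun k _ hk => ?_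
    rw [bellPartial_eq_zero_of_lt ha0 (by simpa using hk), mul_zero]
  calc c (n + 1)
      = ∑ k ∈ range (n + 1), g (k + 1) * bellPartial a (n + 1) (k + 1) := by
        rw [hc, sum_range_succ', bellPartial_succ_zero, mul_zero, add_zero]
    _ = ∑ k ∈ range (n + 1), ∑ i ∈ range (n + 1),
          (n.choose i : R) * a (n - i + 1) * (g (k + 1) * bellPartial a i k) := by
        simp only [bellPartial_succ_succ, mul_sum]
        exact sum_congr rfl fun k _ => sum_congr rfl fun i _ => by ring
    _ = ∑ i ∈ range (n + 1), (n.choose i : R) * a (n - i + 1) * d i := by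
        rw [sum_comm]
        exact sum_congr rfl fun i hi => by rw [hd_range i hi, mul_sum]

/-- Recursion characterizing composition umbrae: with
`c_n = Σ_k g_k B_{n,k}(a)` and `d_n = Σ_k g_{k+1} B_{n,k}(a)`, one has
`c_{n+1} = Σ_i C(n,i) a_{n−i+1} d_i`. -/
theorem composition_umbra_recursion (R : Type*) [CommRing R] [Algebra ℚ R]
    (a g : ℕ → R) (ha0 : a 0 = 1) (hg0 : g 0 = 1)
    (c d : ℕ → R)
    (hc : ∀ n, c n = ∑ k ∈ Finset.range (n + 1), g k * bellPartial a n k)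
    (hd : ∀ n, d n = ∑ k ∈ Finset.range (n + 1), g (k + 1) * bellPartial a n k) :
    ∀ n : ℕ, c (n + 1) =
      ∑ i ∈ Finset.range (n + 1), (n.choose i : R) * a (n - i + 1) * d i :=
  composition_umbra_recursion_general R a g ha0 c d hc hd
end

section
/- Let R be a commutative ℚ-algebra and let a : ℕ → R be a sequence with a_0 = 1. Define the polynomials q_k(x) = Σ_{i=0}^k (x)_i · B_{k,i} ∈ R[x], where (x)_i is the falling factorial and B_{k,i} are the partial Bell polynomials of the sequence a. Then the sequence {q_k} is of binomial type: q_k(x+y) = Σ_{i=0}^k C(k,i) · q_i(x) · q_{k−i}(y) for all k ≥ 0, as an identity in R[x,y]. -/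
open Finset Polynomial

/-!
For `z` in a commutative ℚ-algebra `S`, the exponential generating function
`Σ_k q_k(z) t^k / k! = Σ_i C(z, i) (f(t) - 1)^i` is the binomial series `(1 + u)^z` with
`f(t) - 1` substituted for `u`, i.e. "`f(t)^z`". Since `(1 + u)^(x+y) = (1 + u)^x (1 + u)^y` and
substitution is a ring homomorphism, the generating function of `q_k(x+y)` is the product of
those of `q_k(x)` and `q_k(y)`; comparing coefficients of `t^k` is the binomial-type identity.
-/

open scoped PowerSeries Nat

namespace PowerSeries

theorem coeff_subst_eq_sum_range {R S : Type*} [CommRing R] [CommRing S]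
    [Algebra R S] {b : S⟦X⟧} (hb : constantCoeff b = 0) (f : R⟦X⟧) (n : ℕ) :
    coeff n (f.subst b) = ∑ d ∈ range (n + 1), coeff d f • coeff n (b ^ d) := by
  rw [coeff_subst' (HasSubst.of_constantCoeff_zero' hb)]
  refine finsum_eq_sum_of_support_subset _ fun d hd => mem_range.2 ?_
  by_contra! hnd
  have hlt : (n : ℕ∞) < (b ^ d).order :=
    (Nat.cast_lt.2 hnd).trans_le (le_order_pow_of_constantCoeff_eq_zero d hb)
  exact hd (by simp only [coeff_of_lt_order n hlt, smul_zero])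

theorem factorial_smul_coeff_mul {A : Type*} [CommSemiring A] (f g : A⟦X⟧) (k : ℕ) :
    k ! • coeff k (f * g) = ∑ i ∈ range (k + 1),
      (k.choose i : A) * ((i ! • coeff i f) * ((k - i)! • coeff (k - i) g)) := by
  rw [coeff_mul, Nat.sum_antidiagonal_eq_sum_range_succ (fun i j => coeff i f * coeff j g),
    smul_sum]
  refine sum_congr rfl fun i hi => ?_
  rw [← Nat.choose_mul_factorial_mul_factorial (Nat.lt_succ_iff.1 (mem_range.1 hi))]
  simp only [nsmul_eq_mul, Nat.cast_mul]
  ring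

end PowerSeries

theorem aeval_descPochhammer {R S : Type*} [CommRing R] [Ring S] [Algebra R S] (z : S) (n : ℕ) :
    aeval z (descPochhammer R n) = (descPochhammer ℤ n).smeval z := by
  rw [← descPochhammer_map (algebraMap ℤ R), aeval_map_algebraMap, aeval_eq_smeval]

section PartitionUmbra

variable {R : Type*} [CommRing R] [Algebra ℚ R] (a : ℕ → R)

noncomputable def partitionUmbra (k : ℕ) : R[X] :=
  ∑ i ∈ range (k + 1), descPochhammer R i * C (bellPartial a k i)

theorem constantCoeff_egf_sub_one (ha0 : a 0 = 1) :
    PowerSeries.constantCoeff (egf a - 1) = 0 := by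
  simp [egf, ha0, ← PowerSeries.coeff_zero_eq_constantCoeff]

theorem constantCoeff_map_egf_sub_one (ha0 : a 0 = 1) {S : Type*} [CommRing S] (f : R →+* S) :
    PowerSeries.constantCoeff ((egf a - 1).map f) = 0 := by
  rw [← PowerSeries.coeff_zero_eq_constantCoeff_apply, PowerSeries.coeff_map,
    PowerSeries.coeff_zero_eq_constantCoeff_apply, constantCoeff_egf_sub_one a ha0, map_zero]

theorem bellPartial_eq_nsmul {n k : ℕ} (h : k ≤ n) :
    bellPartial a n k = (n ! / k !) • PowerSeries.coeff n ((egf a - 1) ^ k) := by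
  rw [bellPartial, ← Nat.cast_div (Nat.factorial_dvd_factorial h) (by positivity),
    Nat.cast_smul_eq_nsmul]

theorem aeval_partitionUmbra {S : Type*} [CommRing S] [BinomialRing S] [Algebra R S]
    (ha0 : a 0 = 1) (z : S) (k : ℕ) :
    aeval z (partitionUmbra a k) =
      k ! • PowerSeries.coeff k ((PowerSeries.binomialSeries S z).subst
        ((egf a - 1).map (algebraMap R S))) := by
  rw [PowerSeries.coeff_subst_eq_sum_range (constantCoeff_map_egf_sub_one a ha0 _),
    partitionUmbra, map_sum, smul_sum]
  refine sum_congr rfl fun i hi => ?_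
  have hik : i ≤ k := Nat.lt_succ_iff.1 (mem_range.1 hi)
  obtain ⟨m, hm⟩ := Nat.factorial_dvd_factorial hik
  rw [map_mul, aeval_C, aeval_descPochhammer, Ring.descPochhammer_eq_factorial_smul_choose,
    bellPartial_eq_nsmul a hik, PowerSeries.binomialSeries_coeff, ← map_pow,
    PowerSeries.coeff_map, map_nsmul, hm, Nat.mul_div_cancel_left _ i.factorial_pos]
  simp only [smul_eq_mul, nsmul_eq_mul, Nat.cast_mul, Algebra.algebraMap_eq_smul_one]
  ring

end PartitionUmbra

/-- The polynomials `q_k(x) = Σ_i (x)_i B_{k,i}` are of binomial type: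
`q_k(x+y) = Σ_i C(k,i) q_i(x) q_{k-i}(y)`, as an identity in `R[x,y]`
(realized as `(R[x])[y]`, with `x` and `y` the two indeterminates). -/
theorem partition_umbra_binomial_type (R : Type*) [CommRing R] [Algebra ℚ R]
    (a : ℕ → R) (ha0 : a 0 = 1)
    (q : ℕ → Polynomial R)
    (hq : ∀ k, q k = ∑ i ∈ Finset.range (k + 1),
      descPochhammer R i * Polynomial.C (bellPartial a k i)) :
    ∀ k : ℕ,
      Polynomial.aeval
          (Polynomial.C Polynomial.X + Polynomial.X : Polynomial (Polynomial R)) (q k) =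
        ∑ i ∈ Finset.range (k + 1), (k.choose i : Polynomial (Polynomial R)) *
          (Polynomial.aeval (Polynomial.C Polynomial.X : Polynomial (Polynomial R)) (q i) *
            Polynomial.aeval (Polynomial.X : Polynomial (Polynomial R)) (q (k - i))) := by
  obtain rfl : q = partitionUmbra a := funext hq
  -- a `ℚ≥0`-module structure is what makes Mathlib see the ℚ-algebra `R[X][X]` as a binomial ring
  let _ : Module ℚ≥0 R[X][X] := Module.compHom _ NNRat.coeHom
  intro k
  have hG : PowerSeries.HasSubst ((egf a - 1).map (algebraMap R R[X][X])) :=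
    .of_constantCoeff_zero' (constantCoeff_map_egf_sub_one a ha0 _)
  simp only [aeval_partitionUmbra a ha0, PowerSeries.binomialSeries_add,
    PowerSeries.subst_mul hG,
    PowerSeries.factorial_smul_coeff_mul]
end

section
/- For all nonnegative integers n and k, the Bell numbers satisfy the identity Σ_{j=0}^n C(n,j) · k^{n−j} · B_j = Σ_{m=0}^k s(k,m) · B_{n+m}, where C(n,j) are binomial coefficients, s(k,m) are the signed Stirling numbers of the first kind, and B_j are the Bell numbers. -/
open Finset Polynomial

theorem Nat.stirlingSecond_succ_succ_eq_sum (n k : ℕ) :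
    stirlingSecond (n + 1) (k + 1) = ∑ j ∈ range (n + 1), n.choose j * stirlingSecond j k := by
  induction n generalizing k with
  | zero => cases k <;> rfl
  | succ n ih =>
    have pascal := sum_choose_succ_mul (fun j _ => stirlingSecond j k) n
    simp only [Nat.cast_id] at pascal
    rw [pascal, ← ih]
    cases k with
    | zero => simp [stirlingSecond_one_right]
    | succ k =>
      simp only [stirlingSecond_succ_succ, mul_add, sum_add_distrib, mul_left_comm _ (k + 1),
        ← mul_sum, ← ih]
      ring

theorem bellNum_eq_sum_range_of_le {j m : ℕ} (h : j ≤ m) :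
    bellNum j = ∑ k ∈ range (m + 1), stirling2 j k := by
  rw [bellNum]
  refine sum_subset (range_subset_range.2 (by omega)) fun k _ hk => ?_
  rw [stirling2_eq_stirlingSecond]
  exact Nat.stirlingSecond_eq_zero_of_lt (by simpa using hk)

theorem bellNum_succ (n : ℕ) :
    bellNum (n + 1) = ∑ j ∈ range (n + 1), n.choose j * bellNum j := by
  calc bellNum (n + 1)
      = ∑ k ∈ range (n + 1), stirling2 (n + 1) (k + 1) := by
        rw [bellNum, sum_range_succ']; rfl
    _ = ∑ j ∈ range (n + 1), n.choose j * ∑ k ∈ range (n + 1), stirling2 j k := by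
        simp only [stirling2_eq_stirlingSecond, Nat.stirlingSecond_succ_succ_eq_sum, mul_sum]
        exact sum_comm
    _ = ∑ j ∈ range (n + 1), n.choose j * bellNum j :=
        sum_congr rfl fun j hj => by
          rw [bellNum_eq_sum_range_of_le (Nat.lt_succ_iff.1 (mem_range.1 hj))]

theorem comp_X_add_natCast_eq_descPochhammer_mul {R M : Type*} [CommRing R] (L : R[X] → M)
    (hL : ∀ p, L (X * p) = L (p.comp (X + 1))) (k : ℕ) (p : R[X]) :
    L (p.comp (X + (k : R[X]))) = L (descPochhammer R k * p) := by
  induction k generalizing p with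
  | zero => simp
  | succ k ih =>
    have shift : ((X - (k : R[X])) * p).comp (X + (k : R[X])) = X * p.comp (X + (k : R[X])) := by
      rw [mul_comp, sub_comp, X_comp, natCast_comp]
      ring
    rw [descPochhammer_succ_right, mul_assoc, ← ih, shift, hL, comp_assoc, add_comp, X_comp,
      natCast_comp, Nat.cast_succ, add_assoc, add_comm 1]

noncomputable def bellFunctional : ℚ[X] →ₗ[ℚ] ℚ :=
  lsum fun n => LinearMap.mulRight ℚ (bellNum n : ℚ)

theorem bellFunctional_C_mul_X_pow (c : ℚ) (m : ℕ) :
    bellFunctional (C c * X ^ m) = c * bellNum m := by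
  rw [C_mul_X_pow_eq_monomial, bellFunctional, lsum_apply, sum_monomial_index _ _ (by simp)]
  rfl

theorem bellFunctional_mul_X_pow {p : ℚ[X]} {N : ℕ} (hp : p.natDegree < N) (n : ℕ) :
    bellFunctional (p * X ^ n) = ∑ m ∈ range N, p.coeff m * bellNum (n + m) := by
  conv_lhs => rw [p.as_sum_range_C_mul_X_pow' hp, sum_mul, map_sum]
  refine sum_congr rfl fun m _ => ?_
  rw [mul_assoc, ← pow_add, add_comm, bellFunctional_C_mul_X_pow]

theorem bellFunctional_eq_sum {p : ℚ[X]} {N : ℕ} (hp : p.natDegree < N) :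
    bellFunctional p = ∑ m ∈ range N, p.coeff m * bellNum m := by
  simpa using bellFunctional_mul_X_pow hp 0

theorem bellFunctional_X_mul (p : ℚ[X]) :
    bellFunctional (X * p) = bellFunctional (p.comp (X + 1)) := by
  induction p using Polynomial.induction_on' with
  | add p q hp hq => simp only [mul_add, add_comp, map_add, hp, hq]
  | monomial n c =>
    have hdeg : ((X + 1 : ℚ[X]) ^ n).natDegree < n + 1 := by
      rw [natDegree_pow, ← C_1, natDegree_X_add_C]; omega
    rw [X_mul_monomial, monomial_comp, ← smul_eq_C_mul, map_smul, bellFunctional_eq_sum hdeg,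
      ← C_mul_X_pow_eq_monomial, bellFunctional_C_mul_X_pow, bellNum_succ]
    simp [coeff_X_add_one_pow, mul_sum]

/-- The umbral relation `(β + k.u)^n ≃ (β)_k β^n ≃ β^n` for the Bell umbra:
`Σ_{j=0}^n C(n,j) k^{n−j} B_j = Σ_{m=0}^k s(k,m) B_{n+m}`. -/
theorem bell_shift_identity (n k : ℕ) :
    ∑ j ∈ Finset.range (n + 1), (n.choose j : ℚ) * (k : ℚ) ^ (n - j) * (bellNum j : ℚ) =
      ∑ m ∈ Finset.range (k + 1), stirling1 k m * (bellNum (n + m) : ℚ) := by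
  have hk : (k : ℚ[X]) = C (k : ℚ) := (C_eq_natCast k).symm
  have hdeg_pow : ((X + (k : ℚ[X])) ^ n).natDegree < n + 1 := by
    rw [natDegree_pow, hk, natDegree_X_add_C]; omega
  have hdeg_desc : (descPochhammer ℚ k).natDegree < k + 1 := by
    rw [descPochhammer_natDegree]; omega
  calc _ = bellFunctional ((X + (k : ℚ[X])) ^ n) := by
        rw [bellFunctional_eq_sum hdeg_pow, hk]
        refine sum_congr rfl fun j _ => ?_
        rw [coeff_X_add_C_pow]
        ring
    _ = bellFunctional ((X ^ n).comp (X + (k : ℚ[X]))) := by rw [X_pow_comp]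
    _ = bellFunctional (descPochhammer ℚ k * X ^ n) :=
        comp_X_add_natCast_eq_descPochhammer_mul _ bellFunctional_X_mul k _
    _ = _ := bellFunctional_mul_X_pow hdeg_desc n
end
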